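/- Let ε > 0, let a be a positive real number with a ≠ 1, and let f : ℝ → ℝ be a function satisfying |f(x + y) − f(x) − f(y)| ≤ ε for all x, y ∈ ℝ, and such that the mapping x ↦ f(aˣ) − aˣ·ln(a)·f(x) is locally bounded on ℝ. Then there exist a real number λ and a real derivation χ : ℝ → ℝ such that |f(x) − (χ(x) + λ·x)| ≤ ε for all x ∈ ℝ. -/

import Mathlib

open Real Set

/-- A function `φ` is locally bounded on a set `s` if every point of `s` has a
neighborhood (within `s`) on which `φ` is bounded. -/
def LocallyBoundedOn (φ : ℝ → ℝ) (s : Set ℝ) : Prop :=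
  ∀ x ∈ s, ∃ C : ℝ, ∀ᶠ y in nhdsWithin x s, |φ y| ≤ C

/-- A real-valued function is *regular* on its domain `s` if it is locally bounded,
or continuous, or Lebesgue measurable on `s`. -/
def RegularOn (φ : ℝ → ℝ) (s : Set ℝ) : Prop :=
  LocallyBoundedOn φ s ∨ ContinuousOn φ s ∨ Measurable (s.restrict φ)

/-- A real derivation: an additive function satisfying the Leibniz rule. -/
def IsRealDerivation (χ : ℝ → ℝ) : Prop :=
  (∀ x y : ℝ, χ (x + y) = χ x + χ y) ∧ (∀ x y : ℝ, χ (x * y) = x * χ y + y * χ x)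

/-!
By Hyers' theorem `f` lies within `ε` of an additive `A`, the pointwise limit of `f (2ⁿ x) / 2ⁿ`;
the hypothesis on `f` transfers to `A`, so `H x = A (aˣ) - aˣ log a · A x` is bounded near `0`.
The Leibniz defect `D s t = A (s t) - s A t - t A s` is biadditive and
`D (aˣ) (aʸ) = H (x + y) - aʸ H x - aˣ H y`, so `D` is bounded near `(1, 1)`.
An additive function on `ℝ` bounded near one point is linear, which forces
`D s t = D 1 1 · s t = -A 1 · s t`: this says precisely that `A - A 1 · id` is a derivation.
-/

open Filter Topology Asymptotics

theorem exists_addMonoidHom_norm_sub_le {G E : Type*} [AddCommMonoid G] [NormedAddCommGroup E]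
    [NormedSpace ℝ E] [CompleteSpace E] {f : G → E} {ε : ℝ}
    (hf : ∀ x y, ‖f (x + y) - f x - f y‖ ≤ ε) :
    ∃ A : G →+ E, ∀ x, ‖f x - A x‖ ≤ ε := by
  set u : ℕ → G → E := fun n x => ((2 : ℝ) ^ n)⁻¹ • f (2 ^ n • x)
  have u_succ : ∀ x n, dist (u n x) (u (n + 1) x) ≤ ε / 2 / 2 ^ n := by
    intro x n
    set y := 2 ^ n • x
    have hsplit : u n x - u (n + 1) x = -((2 : ℝ) ^ (n + 1))⁻¹ • (f (y + y) - f y - f y) := by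
      simp only [u, pow_succ, mul_nsmul, two_nsmul]
      module
    rw [dist_eq_norm, hsplit, norm_smul, norm_neg, norm_inv, norm_pow, Real.norm_two]
    calc ((2 : ℝ) ^ (n + 1))⁻¹ * ‖f (y + y) - f y - f y‖ ≤ ((2 : ℝ) ^ (n + 1))⁻¹ * ε := by
          gcongr; exact hf y y
      _ = ε / 2 / 2 ^ n := by rw [pow_succ]; field_simp
  choose A hA using fun x =>
    cauchySeq_tendsto_of_complete (cauchySeq_of_le_geometric_two (u_succ x))
  have A_add : ∀ x y, A (x + y) = A x + A y := by
    intro x y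
    have hdefect : Tendsto (fun n => u n (x + y) - u n x - u n y) atTop (𝓝 0) := by
      have hgeom := (tendsto_pow_atTop_nhds_zero_of_lt_one (by norm_num : (0 : ℝ) ≤ 2⁻¹)
        (by norm_num)).const_mul ε
      rw [mul_zero] at hgeom
      refine squeeze_zero_norm (fun n => ?_) hgeom
      simp only [u, ← smul_sub, norm_smul, nsmul_add, norm_inv, norm_pow, Real.norm_two, inv_pow]
      rw [mul_comm]
      gcongr
      exact hf _ _
    have := tendsto_nhds_unique (((hA (x + y)).sub (hA x)).sub (hA y)) hdefect
    rwa [sub_sub, sub_eq_zero] at this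
  refine ⟨AddMonoidHom.mk' A A_add, fun x => ?_⟩
  simpa [u, dist_eq_norm] using dist_le_of_le_geometric_two_of_tendsto₀ (u_succ x) (hA x)

theorem AddMonoidHom.eq_zero_of_forall_abs_le {G : Type*} [AddMonoid G] (h : G →+ ℝ) {M : ℝ}
    (hM : ∀ x, |h x| ≤ M) : h = 0 := by
  ext x
  by_contra hx
  have hpos : 0 < |h x| := abs_pos.mpr hx
  obtain ⟨n, hn⟩ := exists_nat_gt (M / |h x|)
  have hnx := hM (n • x)
  rw [map_nsmul, nsmul_eq_mul, abs_mul, Nat.abs_cast, ← le_div_iff₀ hpos] at hnx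
  linarith

theorem AddMonoidHom.eq_mul_of_isBigO_one (g : ℝ →+ ℝ) {x₀ : ℝ}
    (hg : (g : ℝ → ℝ) =O[𝓝 x₀] (fun _ => (1 : ℝ))) (x : ℝ) : g x = g 1 * x := by
  set h := g - AddMonoidHom.mulLeft (g 1)
  have h_ratCast : ∀ q : ℚ, h q = 0 := fun q => by
    simpa [h] using map_ratCast_smul h ℝ ℝ q 1
  have h_local : (h : ℝ → ℝ) =O[𝓝 x₀] (fun _ => (1 : ℝ)) :=
    hg.sub (((continuous_const_mul (g 1)).tendsto x₀).isBigO_one ℝ)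
  obtain ⟨M, hM⟩ := (isBigO_one_iff ℝ).mp h_local
  obtain ⟨δ, hδ, hball⟩ := Metric.eventually_nhds_iff.mp hM
  -- translating by a rational number carries any point into the ball where `h` is bounded
  have h_bdd : ∀ y, |h y| ≤ M := by
    intro y
    obtain ⟨q, hq₁, hq₂⟩ := exists_rat_btwn (show y - x₀ - δ < y - x₀ + δ by linarith)
    have hdist : dist (y - q) x₀ < δ := by
      rw [Real.dist_eq, abs_lt]; constructor <;> linarith
    rw [show h y = h (y - q) by rw [map_sub, h_ratCast, sub_zero]]
    exact hball hdist
  have := DFunLike.congr_fun (h.eq_zero_of_forall_abs_le h_bdd) x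
  simp only [h, AddMonoidHom.sub_apply, AddMonoidHom.coe_mulLeft, AddMonoidHom.zero_apply] at this
  linarith

theorem AddMonoidHom.apply_apply_eq_mul_of_isBigO_one (D : ℝ →+ ℝ →+ ℝ)
    (hD : (fun p : ℝ × ℝ => D p.1 p.2) =O[𝓝 (1, 1)] (fun _ => (1 : ℝ))) (s t : ℝ) :
    D s t = D 1 1 * s * t := by
  obtain ⟨M, hM⟩ := (isBigO_one_iff ℝ).mp hD
  rw [nhds_prod_eq] at hM
  obtain ⟨U, hU, V, hV, hUV⟩ := eventually_prod_iff.mp hM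
  have h_left : ∀ t, V t → ∀ s, D s t = D 1 t * s := fun t ht =>
    (D.flip t).eq_mul_of_isBigO_one ((isBigO_one_iff ℝ).mpr ⟨M, hU.mono fun _ hs => hUV hs ht⟩)
  have h_right : D s t = D s 1 * t := by
    refine (D s).eq_mul_of_isBigO_one (x₀ := 1) (IsBigO.of_bound (M * |s|) ?_) t
    filter_upwards [hV] with t ht
    rw [h_left t ht, norm_one, mul_one, Real.norm_eq_abs, abs_mul]
    exact mul_le_mul_of_nonneg_right (hUV hU.self_of_nhds ht) (abs_nonneg s)
  rw [h_right, h_left 1 hV.self_of_nhds s]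

def AddMonoidHom.leibnizDefect {R : Type*} [CommRing R] (A : R →+ R) : R →+ R →+ R :=
  AddMonoidHom.mul.compr₂ A - AddMonoidHom.mul.compl₂ A - (AddMonoidHom.mul.compl₂ A).flip

theorem AddMonoidHom.leibnizDefect_apply {R : Type*} [CommRing R] (A : R →+ R) (s t : R) :
    A.leibnizDefect s t = A (s * t) - s * A t - t * A s :=
  rfl

theorem AddMonoidHom.leibnizDefect_one_one {R : Type*} [CommRing R] (A : R →+ R) :
    A.leibnizDefect 1 1 = -A 1 := by
  rw [leibnizDefect_apply, mul_one, one_mul]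
  ring

noncomputable def expDefect (a : ℝ) (g : ℝ → ℝ) (x : ℝ) : ℝ :=
  g (a ^ x) - a ^ x * Real.log a * g x

theorem LocallyBoundedOn.expDefect_isBigO_one {a : ℝ} {g : ℝ → ℝ}
    (hg : LocallyBoundedOn (expDefect a g) univ) (x₀ : ℝ) :
    expDefect a g =O[𝓝 x₀] (fun _ => (1 : ℝ)) := by
  obtain ⟨C, hC⟩ := hg x₀ (mem_univ x₀)
  rw [nhdsWithin_univ] at hC
  exact IsBigO.of_bound C (hC.mono fun x hx => by simpa using hx)

theorem expDefect_isBigO_one_of_abs_sub_le {a : ℝ} (ha : 0 < a) {f g : ℝ → ℝ} {ε x₀ : ℝ}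
    (hfg : ∀ x, |f x - g x| ≤ ε) (hf : expDefect a f =O[𝓝 x₀] (fun _ => (1 : ℝ))) :
    expDefect a g =O[𝓝 x₀] (fun _ => (1 : ℝ)) := by
  have hbdd : ∀ l : Filter ℝ, (fun x => f x - g x) =O[l] (fun _ => (1 : ℝ)) := fun l =>
    IsBigO.of_bound ε (Eventually.of_forall fun x => by simpa using hfg x)
  have hcoeff : (fun x => a ^ x * Real.log a) =O[𝓝 x₀] (fun _ => (1 : ℝ)) :=
    ((Real.continuousAt_const_rpow ha.ne').mul continuousAt_const).tendsto.isBigO_one ℝ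
  have := (hf.sub ((hbdd ⊤).comp_tendsto (tendsto_top (f := fun x => a ^ x)))).add
    ((hcoeff.mul (hbdd _)).congr_right fun _ => mul_one 1)
  refine this.congr_left fun x => ?_
  simp only [expDefect, Function.comp]
  ring

theorem leibnizDefect_rpow_rpow (A : ℝ →+ ℝ) {a : ℝ} (ha : 0 < a) (x y : ℝ) :
    A.leibnizDefect (a ^ x) (a ^ y) =
      expDefect a A (x + y) - a ^ y * expDefect a A x - a ^ x * expDefect a A y := by
  simp only [AddMonoidHom.leibnizDefect_apply, expDefect, Real.rpow_add ha, map_add]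
  ring

theorem leibnizDefect_isBigO_one (A : ℝ →+ ℝ) {a : ℝ} (ha : 0 < a) (ha1 : a ≠ 1)
    (hA : expDefect a A =O[𝓝 0] (fun _ => (1 : ℝ))) :
    (fun p : ℝ × ℝ => A.leibnizDefect p.1 p.2) =O[𝓝 (1, 1)] (fun _ => (1 : ℝ)) := by
  have hlog : Tendsto (Real.logb a) (𝓝 1) (𝓝 0) := by
    simpa using (Real.continuousAt_logb one_ne_zero).tendsto
  have hlog₁ := hlog.comp (continuous_fst.tendsto ((1 : ℝ), (1 : ℝ)))
  have hlog₂ := hlog.comp (continuous_snd.tendsto ((1 : ℝ), (1 : ℝ)))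
  have hsum : Tendsto (fun p : ℝ × ℝ => Real.logb a p.1 + Real.logb a p.2) (𝓝 (1, 1)) (𝓝 0) := by
    simpa using hlog₁.add hlog₂
  have hfst : (fun p : ℝ × ℝ => p.1) =O[𝓝 (1, 1)] (fun _ => (1 : ℝ)) :=
    (continuous_fst.tendsto _).isBigO_one ℝ
  have hsnd : (fun p : ℝ × ℝ => p.2) =O[𝓝 (1, 1)] (fun _ => (1 : ℝ)) :=
    (continuous_snd.tendsto _).isBigO_one ℝ
  have hbound := ((hA.comp_tendsto hsum).sub
    ((hsnd.mul (hA.comp_tendsto hlog₁)).congr_right fun _ => mul_one 1)).sub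
    ((hfst.mul (hA.comp_tendsto hlog₂)).congr_right fun _ => mul_one 1)
  refine hbound.congr' ?_ EventuallyEq.rfl
  filter_upwards [prod_mem_nhds (Ioi_mem_nhds one_pos) (Ioi_mem_nhds one_pos)]
    with p ⟨h₁, h₂⟩
  simpa only [Real.rpow_logb ha ha1 h₁, Real.rpow_logb ha ha1 h₂, Function.comp_apply] using
    (leibnizDefect_rpow_rpow A ha (Real.logb a p.1) (Real.logb a p.2)).symm

theorem stmt_12_general (ε : ℝ) (a : ℝ) (ha : 0 < a) (ha1 : a ≠ 1)
    (f : ℝ → ℝ)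
    (hf : ∀ x y : ℝ, |f (x + y) - f x - f y| ≤ ε)
    (hlb : LocallyBoundedOn (fun x : ℝ => f (a ^ x) - a ^ x * Real.log a * f x) Set.univ) :
    ∃ (l : ℝ) (χ : ℝ → ℝ), IsRealDerivation χ ∧
      ∀ x : ℝ, |f x - (χ x + l * x)| ≤ ε := by
  obtain ⟨A, hA⟩ := exists_addMonoidHom_norm_sub_le (f := f) hf
  have hA_exp := expDefect_isBigO_one_of_abs_sub_le ha hA (hlb.expDefect_isBigO_one 0)
  have hD := A.leibnizDefect.apply_apply_eq_mul_of_isBigO_one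
    (leibnizDefect_isBigO_one A ha ha1 hA_exp)
  refine ⟨A 1, fun x => A x - A 1 * x, ⟨fun x y => ?_, fun x y => ?_⟩, fun x => ?_⟩
  · simp only [map_add]
    ring
  · have hxy := hD x y
    rw [AddMonoidHom.leibnizDefect_apply, AddMonoidHom.leibnizDefect_one_one] at hxy
    linear_combination hxy
  · simpa using hA x

theorem stmt_12 (ε : ℝ) (hε : 0 < ε) (a : ℝ) (ha : 0 < a) (ha1 : a ≠ 1)
    (f : ℝ → ℝ)
    (hf : ∀ x y : ℝ, |f (x + y) - f x - f y| ≤ ε)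
    (hlb : LocallyBoundedOn (fun x : ℝ => f (a ^ x) - a ^ x * Real.log a * f x) Set.univ) :
    ∃ (l : ℝ) (χ : ℝ → ℝ), IsRealDerivation χ ∧
      ∀ x : ℝ, |f x - (χ x + l * x)| ≤ ε :=
  stmt_12_general ε a ha ha1 f hf hlb
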